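/- arXiv:2512.21874 — 6 statements merged into one kernel-verified Lean document; each statement's English description precedes it below -/
import Mathlib

section
/- With K, r, m, Z, a and the code C₀ as in the context: (i) the all-ones vector on Z belongs to C₀ (it equals c_h for h = (X^r + X)^a, which has degree ra ≤ a(r+1)); (ii) for all polynomials h₁, h₂, h₃ ∈ K[X] of degree at most a(r+1), Σ_{α ∈ Z} c_{h₁}(α) · c_{h₂}(α) · c_{h₃}(α) = 0; (iii) for all polynomials h₁, h₂ ∈ K[X] of degree at most a(r+1), Σ_{α ∈ Z} c_{h₁}(α) · c_{h₂}(α) = 0. Hence C₀ is a triorthogonal linear code of length r(r−1) over the alphabet K = F_{r²}. -/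
open Polynomial Finset

/-- Sum of a polynomial of small degree over a finite field vanishes. -/
lemma sum_eval_eq_zero_of_natDegree_lt {K : Type*} [Field K] [Fintype K]
    (g : K[X]) (hg : g.natDegree < Fintype.card K - 1) :
    ∑ α : K, g.eval α = 0 := by
  have hrw : ∀ α : K, g.eval α = ∑ i ∈ Finset.range (g.natDegree + 1), g.coeff i * α ^ i :=
    fun α => eval_eq_sum_range α
  calc ∑ α : K, g.eval α
      = ∑ α : K, ∑ i ∈ Finset.range (g.natDegree + 1), g.coeff i * α ^ i := by
        exact Finset.sum_congr rfl fun α _ => hrw α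
    _ = ∑ i ∈ Finset.range (g.natDegree + 1), ∑ α : K, g.coeff i * α ^ i := by
        rw [Finset.sum_comm]
    _ = 0 := by
        refine Finset.sum_eq_zero fun i hi => ?_
        rw [← Finset.mul_sum, FiniteField.sum_pow_lt_card_sub_one K i ?_, mul_zero]
        have : i < g.natDegree + 1 := Finset.mem_range.mp hi
        omega

/-- The base code `C₀` of the paper, with coordinates `c_h(α) = h(α)/(α^r + α)^a` for
`α ∈ Z = {α : α^r ≠ α}` and `h` ranging over polynomials of degree at most `a(r+1)`,
is a triorthogonal linear code of length `r(r-1)` over the field `K` with `r²` elements: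
it contains the all-ones word (realized by `h = (X^r + X)^a`), any three codewords have
vanishing triple pointwise sum, and any two codewords have vanishing dot product. -/
theorem base_code_triorthogonal
    (m : ℕ) (hm : 3 ≤ m) (r : ℕ) (hr : r = 2 ^ m)
    (K : Type*) [Field K] [Fintype K] [DecidableEq K]
    (hchar : CharP K 2) (hcard : Fintype.card K = r ^ 2)
    (a : ℕ) (ha : a = (r - 2) / 3)
    (Z : Finset K) (hZ : Z = Finset.univ.filter (fun α : K => α ^ r ≠ α))
    (c : K[X] → K → K) (hc : ∀ h α, c h α = h.eval α / (α ^ r + α) ^ a) :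
    -- the code has length r(r-1)
    Z.card = r * (r - 1) ∧
    -- (i) the all-ones word is a codeword, realized by h = (X^r + X)^a of degree ra ≤ a(r+1)
    (((X ^ r + X : K[X]) ^ a).natDegree ≤ a * (r + 1) ∧
      ∀ α ∈ Z, c ((X ^ r + X) ^ a) α = 1) ∧
    -- (ii) triple orthogonality
    (∀ h₁ h₂ h₃ : K[X], h₁.natDegree ≤ a * (r + 1) → h₂.natDegree ≤ a * (r + 1) →
      h₃.natDegree ≤ a * (r + 1) →
      ∑ α ∈ Z, c h₁ α * c h₂ α * c h₃ α = 0) ∧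
    -- (iii) pairwise orthogonality
    (∀ h₁ h₂ : K[X], h₁.natDegree ≤ a * (r + 1) → h₂.natDegree ≤ a * (r + 1) →
      ∑ α ∈ Z, c h₁ α * c h₂ α = 0) := by
  haveI := hchar
  haveI : Fact (Nat.Prime 2) := ⟨Nat.prime_two⟩
  have hr8 : 8 ≤ r := by
    rw [hr]
    calc (8 : ℕ) = 2 ^ 3 := by norm_num
    _ ≤ 2 ^ m := Nat.pow_le_pow_right (by norm_num) hm
  have hr1 : 1 < r := by omega
  have hr0 : 0 < r := by omega
  -- char-2 facts
  have hpowcard : ∀ α : K, α ^ (r ^ 2) = α := by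
    intro α
    rw [← hcard]
    exact FiniteField.pow_card α
  -- `α^r + α` lands in the subfield `F_r`
  have htr : ∀ α : K, (α ^ r + α) ^ r = α ^ r + α := by
    intro α
    rw [hr, add_pow_char_pow, ← pow_mul, ← pow_two, ← hr, hpowcard, add_comm]
  -- on `Z`, `α^r + α ≠ 0`
  have htne : ∀ α ∈ Z, (α ^ r + α) ≠ 0 := by
    intro α hα h0
    rw [hZ, Finset.mem_filter] at hα
    apply hα.2
    have : α ^ r = -α := by linear_combination h0
    rw [this, CharTwo.neg_eq]
  -- on `Z`, `(α^r + α)^(r-1) = 1`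
  have htpow : ∀ α ∈ Z, (α ^ r + α) ^ (r - 1) = 1 := by
    intro α hα
    have h1 : (α ^ r + α) ^ (r - 1) * (α ^ r + α) = 1 * (α ^ r + α) := by
      rw [one_mul, ← pow_succ]
      have : r - 1 + 1 = r := by omega
      rw [this, htr]
    exact mul_right_cancel₀ (htne α hα) h1
  -- key vanishing lemma
  have key : ∀ (h : K[X]) (s : ℕ), s ≤ r - 2 → h.natDegree ≤ s * (r + 1) →
      ∑ α ∈ Z, h.eval α / (α ^ r + α) ^ s = 0 := by
    intro h s hs hdeg
    set g : K[X] := h * (X ^ r + X) ^ (r - 1 - s) with hg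
    have hb1 : 1 ≤ r - 1 - s := by omega
    have hptwise : ∀ α ∈ Z, h.eval α / (α ^ r + α) ^ s = g.eval α := by
      intro α hα
      have ht := htne α hα
      have hsplit : (α ^ r + α) ^ s * (α ^ r + α) ^ (r - 1 - s) = 1 := by
        rw [← pow_add]
        have : s + (r - 1 - s) = r - 1 := by omega
        rw [this, htpow α hα]
      rw [hg, eval_mul, eval_pow, eval_add, eval_pow, eval_X,
        div_eq_iff (pow_ne_zero s ht), mul_assoc,
        mul_comm ((α ^ r + α) ^ (r - 1 - s)) _, hsplit, mul_one]
    rw [Finset.sum_congr rfl hptwise]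
    have hzero : ∀ α ∈ (Finset.univ : Finset K), α ∉ Z → g.eval α = 0 := by
      intro α _ hα
      rw [hZ, Finset.mem_filter] at hα
      have heq : α ^ r = α := by
        by_contra hne
        exact hα ⟨Finset.mem_univ α, hne⟩
      rw [hg, eval_mul, eval_pow, eval_add, eval_pow, eval_X, heq,
        CharTwo.add_self_eq_zero, zero_pow (by omega), mul_zero]
    rw [Finset.sum_subset (Finset.subset_univ Z) hzero]
    apply sum_eval_eq_zero_of_natDegree_lt
    rw [hcard]
    have hdg : g.natDegree ≤ s * (r + 1) + (r - 1 - s) * r := by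
      refine le_trans (natDegree_mul_le) (add_le_add hdeg ?_)
      refine le_trans (natDegree_pow_le) ?_
      have : (X ^ r + X : K[X]).natDegree ≤ r := by
        refine le_trans (natDegree_add_le _ _) ?_
        simp [natDegree_X_pow, natDegree_X]
        omega
      exact Nat.mul_le_mul_left _ this
    have harith : s * (r + 1) + (r - 1 - s) * r < r ^ 2 - 1 := by
      have hs' : (s : ℤ) ≤ (r : ℤ) - 2 := by omega
      zify [show s ≤ r - 1 by omega, Nat.one_le_pow 2 r hr0,
        show 1 ≤ r by omega]
      nlinarith [hs']
    omega
  have h3a : 3 * a ≤ r - 2 := by omega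
  have h2a : 2 * a ≤ r - 2 := by omega
  refine ⟨?_, ⟨?_, ?_⟩, ?_, ?_⟩
  · -- length
    have hfact : (X ^ (r ^ 2) - X : K[X]) = (X ^ r - X) * ((X ^ r - X) ^ (r - 1) + 1) := by
      have h1 : (X ^ r - X : K[X]) ^ r = X ^ (r ^ 2) - X ^ r := by
        rw [CharTwo.sub_eq_add, CharTwo.sub_eq_add, hr, add_pow_char_pow, ← pow_mul,
          ← pow_two]
      have h2 : (X ^ r - X : K[X]) * ((X ^ r - X) ^ (r - 1) + 1)
          = (X ^ r - X) ^ r + (X ^ r - X) := by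
        rw [mul_add, mul_one, mul_comm, ← pow_succ]
        congr 2
        omega
      rw [h2, h1]
      ring
    have hp0 : (X ^ r - X : K[X]) ≠ 0 := FiniteField.X_pow_card_sub_X_ne_zero K hr1
    have hq0 : (X ^ (r ^ 2) - X : K[X]) ≠ 0 :=
      FiniteField.X_pow_card_sub_X_ne_zero K (by nlinarith)
    have hg0 : ((X ^ r - X : K[X]) ^ (r - 1) + 1) ≠ 0 := by
      intro h0
      apply hq0
      rw [hfact, h0, mul_zero]
    have hroots : (X ^ (r ^ 2) - X : K[X]).roots = Finset.univ.val := by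
      have := FiniteField.roots_X_pow_card_sub_X K
      rwa [hcard] at this
    have hsum : (X ^ r - X : K[X]).roots + ((X ^ r - X : K[X]) ^ (r - 1) + 1).roots
        = Finset.univ.val := by
      rw [← roots_mul (mul_ne_zero hp0 hg0), ← hfact, hroots]
    have hcardp : Multiset.card (X ^ r - X : K[X]).roots ≤ r := by
      refine le_trans (card_roots' _) ?_
      rw [FiniteField.X_pow_card_sub_X_natDegree_eq K hr1]
    have hcardg : Multiset.card ((X ^ r - X : K[X]) ^ (r - 1) + 1).roots ≤ (r - 1) * r := by
      refine le_trans (card_roots' _) ?_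
      refine le_trans (natDegree_add_le _ _) ?_
      simp only [natDegree_one]
      rw [max_eq_left (Nat.zero_le _)]
      refine le_trans (natDegree_pow_le) ?_
      rw [FiniteField.X_pow_card_sub_X_natDegree_eq K hr1]
    have huniv : Multiset.card (Finset.univ : Finset K).val = r ^ 2 := by
      rw [← hcard]; rfl
    have hrr : r + (r - 1) * r = r ^ 2 := by
      zify [show 1 ≤ r by omega]; ring
    have hsumcard : Multiset.card (X ^ r - X : K[X]).roots
        + Multiset.card ((X ^ r - X : K[X]) ^ (r - 1) + 1).roots = r ^ 2 := by
      rw [← Multiset.card_add, hsum, huniv]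
    have hcardeq : Multiset.card (X ^ r - X : K[X]).roots = r := by linarith
    have hnodup : (X ^ r - X : K[X]).roots.Nodup :=
      Multiset.nodup_of_le (Multiset.le_iff_exists_add.mpr ⟨_, hsum.symm⟩)
        Finset.univ.nodup
    have hF : (Finset.univ.filter (fun α : K => α ^ r = α))
        = (X ^ r - X : K[X]).roots.toFinset := by
      ext α
      simp only [Finset.mem_filter, Finset.mem_univ, true_and, Multiset.mem_toFinset,
        mem_roots hp0, IsRoot.def, eval_sub, eval_pow, eval_X, sub_eq_zero]
    have hFcard : (Finset.univ.filter (fun α : K => α ^ r = α)).card = r := by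
      rw [hF, Multiset.toFinset_card_of_nodup hnodup, hcardeq]
    have hsplitcard := Finset.card_filter_add_card_filter_not
      (s := (Finset.univ : Finset K)) (p := fun α : K => α ^ r = α)
    rw [Finset.card_univ, hcard, hFcard] at hsplitcard
    have : Z.card = r ^ 2 - r := by
      rw [hZ]
      have : (Finset.univ.filter (fun α : K => ¬ α ^ r = α)).card = r ^ 2 - r := by omega
      convert this using 2
    rw [this]
    zify [show r ≤ r ^ 2 by nlinarith, show 1 ≤ r by omega]
    ring
  · -- degree of (X^r + X)^a
    refine le_trans (natDegree_pow_le) ?_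
    have : (X ^ r + X : K[X]).natDegree ≤ r := by
      refine le_trans (natDegree_add_le _ _) ?_
      simp [natDegree_X_pow, natDegree_X]
      omega
    calc a * (X ^ r + X : K[X]).natDegree ≤ a * r := Nat.mul_le_mul_left _ this
      _ ≤ a * (r + 1) := Nat.mul_le_mul_left _ (by omega)
  · -- all-ones
    intro α hα
    rw [hc, eval_pow, eval_add, eval_pow, eval_X, div_self]
    exact pow_ne_zero _ (htne α hα)
  · -- triple orthogonality
    intro h₁ h₂ h₃ hd₁ hd₂ hd₃
    have hpt : ∀ α ∈ Z, c h₁ α * c h₂ α * c h₃ α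
        = (h₁ * h₂ * h₃).eval α / (α ^ r + α) ^ (3 * a) := by
      intro α hα
      rw [hc, hc, hc, eval_mul, eval_mul, div_mul_div_comm, div_mul_div_comm,
        ← pow_add, ← pow_add]
      congr 2
      omega
    rw [Finset.sum_congr rfl hpt]
    refine key _ (3 * a) h3a ?_
    calc (h₁ * h₂ * h₃).natDegree ≤ (h₁ * h₂).natDegree + h₃.natDegree := natDegree_mul_le
      _ ≤ h₁.natDegree + h₂.natDegree + h₃.natDegree := by
          exact Nat.add_le_add_right natDegree_mul_le _
      _ ≤ a * (r + 1) + a * (r + 1) + a * (r + 1) := by omega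
      _ = 3 * a * (r + 1) := by ring
  · -- pairwise orthogonality
    intro h₁ h₂ hd₁ hd₂
    have hpt : ∀ α ∈ Z, c h₁ α * c h₂ α
        = (h₁ * h₂).eval α / (α ^ r + α) ^ (2 * a) := by
      intro α hα
      rw [hc, hc, eval_mul, div_mul_div_comm, ← pow_add]
      congr 2
      omega
    rw [Finset.sum_congr rfl hpt]
    refine key _ (2 * a) h2a ?_
    calc (h₁ * h₂).natDegree ≤ h₁.natDegree + h₂.natDegree := natDegree_mul_le
      _ ≤ a * (r + 1) + a * (r + 1) := by omega
      _ = 2 * a * (r + 1) := by ring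
end

section
/- With K, r, m and a as in the context: for all polynomials h₁, h₂, h₃ ∈ K[X] each of degree at most a(r+1), the sum over the entire field vanishes: Σ_{α ∈ K} h₁(α) · h₂(α) · h₃(α) · (α^r + α)^{r−1−3a} = 0. (Note r − 1 − 3a ≥ 1, and the total degree of the summand polynomial is at most r² − r + 3a < r² − 1, so this expresses the triple orthogonality of the base code in purely polynomial form.) -/
open Polynomial

/-- Triple orthogonality of the base code in purely polynomial form: for polynomials
`h₁, h₂, h₃` of degree at most `a(r+1)` over the field `K` with `r²` elements, the sum
`Σ_{α ∈ K} h₁(α)h₂(α)h₃(α)(α^r + α)^{r-1-3a}` vanishes. -/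
theorem triple_orthogonality_polynomial_form
    (m : ℕ) (hm : 3 ≤ m) (r : ℕ) (hr : r = 2 ^ m)
    (K : Type*) [Field K] [Fintype K]
    (hchar : CharP K 2) (hcard : Fintype.card K = r ^ 2)
    (a : ℕ) (ha : a = (r - 2) / 3)
    (h₁ h₂ h₃ : K[X])
    (hd₁ : h₁.natDegree ≤ a * (r + 1))
    (hd₂ : h₂.natDegree ≤ a * (r + 1))
    (hd₃ : h₃.natDegree ≤ a * (r + 1)) :
    ∑ α : K, h₁.eval α * h₂.eval α * h₃.eval α * (α ^ r + α) ^ (r - 1 - 3 * a) = 0 := by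
  classical
  have hr8 : 8 ≤ r := by
    have : 2 ^ 3 ≤ 2 ^ m := Nat.pow_le_pow_right (by norm_num) hm
    omega
  have h3a : 3 * a ≤ r - 2 := by omega
  set P : K[X] := h₁ * h₂ * h₃ * (X ^ r + X) ^ (r - 1 - 3 * a) with hP
  -- degree bound for P
  have hXr : (X ^ r + X : K[X]).natDegree ≤ r :=
    le_trans (natDegree_add_le _ _) (by simp; omega)
  have hpow : ((X ^ r + X : K[X]) ^ (r - 1 - 3 * a)).natDegree ≤ (r - 1 - 3 * a) * r := by
    refine le_trans (natDegree_pow_le) ?_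
    exact Nat.mul_le_mul_left _ hXr
  have hdegP : P.natDegree ≤ 3 * (a * (r + 1)) + (r - 1 - 3 * a) * r := by
    refine le_trans (natDegree_mul_le) ?_
    refine le_trans (Nat.add_le_add (le_trans natDegree_mul_le
      (Nat.add_le_add (le_trans natDegree_mul_le (Nat.add_le_add hd₁ hd₂)) hd₃)) hpow) ?_
    omega
  have hlt : P.natDegree < r ^ 2 - 1 := by
    obtain ⟨k, hk⟩ : ∃ k, r = 3 * a + k + 1 ∧ 1 ≤ k := ⟨r - 1 - 3 * a, by omega, by omega⟩
    obtain ⟨hk, hk1⟩ := hk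
    have he : r - 1 - 3 * a = k := by omega
    rw [he] at hdegP
    refine lt_of_le_of_lt hdegP ?_
    have h2 : 3 * (a * (r + 1)) + k * r + 2 ≤ r ^ 2 := by
      rw [hk]; nlinarith
    omega
  -- rewrite the sum as sum of evaluations of P
  have hsum : ∑ α : K, h₁.eval α * h₂.eval α * h₃.eval α * (α ^ r + α) ^ (r - 1 - 3 * a)
      = ∑ α : K, P.eval α := by
    apply Finset.sum_congr rfl
    intro α _
    simp [hP]
  rw [hsum]
  calc ∑ α : K, P.eval α
      = ∑ α : K, ∑ i ∈ Finset.range (P.natDegree + 1), P.coeff i * α ^ i := by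
        refine Finset.sum_congr rfl fun α _ => ?_
        exact eval_eq_sum_range (p := P) α
    _ = ∑ i ∈ Finset.range (P.natDegree + 1), P.coeff i * ∑ α : K, α ^ i := by
        rw [Finset.sum_comm]
        simp [Finset.mul_sum]
    _ = 0 := by
        refine Finset.sum_eq_zero fun i hi => ?_
        have hi' := Finset.mem_range.mp hi
        rw [FiniteField.sum_pow_lt_card_sub_one (K := K) i (by rw [hcard]; omega), mul_zero]
end

section
/- With K, r, m and a as in the context: for all polynomials h₁, h₂ ∈ K[X] each of degree at most a(r+1), Σ_{α ∈ K} h₁(α) · h₂(α) · (α^r + α)^{r−1−2a} = 0. (The total degree of the summand polynomial is at most r² − r + 2a < r² − 1, so the sum over all field elements vanishes; this expresses the pairwise orthogonality of the base code in purely polynomial form.) -/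
open Polynomial

/-- Pairwise orthogonality of the base code in purely polynomial form: for polynomials
`h₁, h₂` of degree at most `a(r+1)` over the field `K` with `r²` elements, the sum
`Σ_{α ∈ K} h₁(α)h₂(α)(α^r + α)^{r-1-2a}` vanishes. -/
theorem pairwise_orthogonality_polynomial_form
    (m : ℕ) (hm : 3 ≤ m) (r : ℕ) (hr : r = 2 ^ m)
    (K : Type*) [Field K] [Fintype K]
    (hchar : CharP K 2) (hcard : Fintype.card K = r ^ 2)
    (a : ℕ) (ha : a = (r - 2) / 3)
    (h₁ h₂ : K[X])
    (hd₁ : h₁.natDegree ≤ a * (r + 1))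
    (hd₂ : h₂.natDegree ≤ a * (r + 1)) :
    ∑ α : K, h₁.eval α * h₂.eval α * (α ^ r + α) ^ (r - 1 - 2 * a) = 0 := by
  have hr8 : 8 ≤ r := by
    rw [hr]
    calc (8:ℕ) = 2 ^ 3 := by norm_num
    _ ≤ 2 ^ m := Nat.pow_le_pow_right (by norm_num) hm
  have h3a : 3 * a ≤ r - 2 := by
    rw [ha, Nat.mul_comm]; exact Nat.div_mul_le_self _ _
  have h2a : 2 * a + 2 ≤ r := by omega
  set P : K[X] := h₁ * h₂ * (X ^ r + X) ^ (r - 1 - 2 * a) with hP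
  -- degree bound
  have hXr : (X ^ r + X : K[X]).natDegree ≤ r := by
    apply (natDegree_add_le _ _).trans
    simp [natDegree_X_pow, natDegree_X]
    omega
  have hNP : P.natDegree ≤ 2 * (a * (r + 1)) + (r - (2 * a + 1)) * r := by
    have he : r - 1 - 2 * a = r - (2 * a + 1) := by omega
    rw [hP, he]
    apply (natDegree_mul_le).trans
    have h3 : ((X ^ r + X : K[X]) ^ (r - (2 * a + 1))).natDegree ≤ (r - (2*a+1)) * r := by
      apply (natDegree_pow_le).trans
      exact Nat.mul_le_mul_left _ hXr
    have h12 := (natDegree_mul_le (p := h₁) (q := h₂)).trans (Nat.add_le_add hd₁ hd₂)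
    omega
  have hNlt : P.natDegree < Fintype.card K - 1 := by
    rw [hcard]
    have hle : r ≤ r * r := Nat.le_mul_of_pos_left r (by omega)
    have key : 2 * (a * (r + 1)) + (r - (2 * a + 1)) * r = r * r - r + 2 * a := by
      have h1 : (2 * a + 1) * r ≤ r * r := Nat.mul_le_mul_right _ (by omega)
      zify [show 2 * a + 1 ≤ r by omega, hle, h1]
      ring
    rw [key] at hNP
    have hsq : r ^ 2 = r * r := sq r
    rw [hsq]
    generalize r * r = x at hle hNP ⊢
    omega
  -- rewrite summand as evaluation of P
  have hev : ∀ α : K, h₁.eval α * h₂.eval α * (α ^ r + α) ^ (r - 1 - 2 * a) = P.eval α := by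
    intro α; simp [hP]
  simp only [hev]
  have hrange : ∀ α : K, P.eval α =
      ∑ i ∈ Finset.range (P.natDegree + 1), P.coeff i * α ^ i := fun α =>
    eval_eq_sum_range α
  simp only [hrange]
  rw [Finset.sum_comm]
  refine Finset.sum_eq_zero fun i hi => ?_
  rw [← Finset.mul_sum, FiniteField.sum_pow_lt_card_sub_one K i ?_, mul_zero]
  have := Finset.mem_range.mp hi
  omega
end

section
/- Let K be a finite field of characteristic 2 with r² elements, where r = 2^m and m ≥ 1, and let θ ∈ K satisfy θ + θ^r = 1. Let x₀, x₁, y₀, y₁, z₀, z₁ ∈ K each satisfy w^r = w (i.e. they lie in the subfield F_r), and set x = x₀θ + x₁θ^r, y = y₀θ + y₁θ^r, z = z₀θ + z₁θ^r. Then xyz + (xyz)^r = (1 + θ^{r+1})·(x₀y₀z₀ + x₁y₁z₁) + θ^{r+1}·(x₀y₀z₁ + x₀y₁z₀ + x₁y₀z₀ + x₀y₁z₁ + x₁y₀z₁ + x₁y₁z₀). That is, with γ = 1 + θ^{r+1} and η = θ^{r+1}, the relative trace Tr_{K/F_r}(xyz) equals γ(x₀y₀z₀ + x₁y₁z₁)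 + η·Σ_{i+j+k ∈ {1,2}} x_i y_j z_k. -/
/-- Expansion of the relative trace `Tr_{K/F_r}(xyz) = xyz + (xyz)^r` in the normal basis
`{θ, θ^r}` with `θ + θ^r = 1`: writing `x = x₀θ + x₁θ^r`, `y = y₀θ + y₁θ^r`,
`z = z₀θ + z₁θ^r` with `x_i, y_i, z_i` in the subfield `F_r`, one gets
`γ(x₀y₀z₀ + x₁y₁z₁) + η·Σ_{i+j+k ∈ {1,2}} x_i y_j z_k` with `γ = 1 + θ^{r+1}`,
`η = θ^{r+1}`. -/
theorem relative_trace_of_triple_product_expansion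
    (m : ℕ) (hm : 1 ≤ m) (r : ℕ) (hr : r = 2 ^ m)
    (K : Type*) [Field K] [Fintype K]
    (hchar : CharP K 2) (hcard : Fintype.card K = r ^ 2)
    (θ : K) (hθ : θ + θ ^ r = 1)
    (x₀ x₁ y₀ y₁ z₀ z₁ : K)
    (hx₀ : x₀ ^ r = x₀) (hx₁ : x₁ ^ r = x₁)
    (hy₀ : y₀ ^ r = y₀) (hy₁ : y₁ ^ r = y₁)
    (hz₀ : z₀ ^ r = z₀) (hz₁ : z₁ ^ r = z₁)
    (x y z : K)
    (hx : x = x₀ * θ + x₁ * θ ^ r)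
    (hy : y = y₀ * θ + y₁ * θ ^ r)
    (hz : z = z₀ * θ + z₁ * θ ^ r) :
    x * y * z + (x * y * z) ^ r =
      (1 + θ ^ (r + 1)) * (x₀ * y₀ * z₀ + x₁ * y₁ * z₁) +
      θ ^ (r + 1) *
        (x₀ * y₀ * z₁ + x₀ * y₁ * z₀ + x₁ * y₀ * z₀ +
         x₀ * y₁ * z₁ + x₁ * y₀ * z₁ + x₁ * y₁ * z₀) := by
  haveI := hchar
  haveI : Fact (Nat.Prime 2) := ⟨Nat.prime_two⟩
  have h2 : (2 : K) = 0 := by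
    simpa using (CharP.cast_eq_zero K 2)
  have ht : θ ^ r = 1 + θ := by linear_combination hθ - θ * h2
  subst hr
  have frob : ∀ a b : K, (a + b) ^ (2 ^ m) = a ^ (2 ^ m) + b ^ (2 ^ m) :=
    fun a b => add_pow_char_pow a b 2 m
  have htrr : (θ ^ (2 ^ m)) ^ (2 ^ m) = θ := by
    rw [ht, frob, one_pow, ht]; linear_combination h2
  have key : θ ^ (2 ^ m + 1) = (1 + θ) * θ := by rw [pow_succ, ht]
  have hxr : x ^ (2 ^ m) = x₀ * (1 + θ) + x₁ * θ := by
    rw [hx, frob, mul_pow, mul_pow, hx₀, hx₁, htrr, ht]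
  have hyr : y ^ (2 ^ m) = y₀ * (1 + θ) + y₁ * θ := by
    rw [hy, frob, mul_pow, mul_pow, hy₀, hy₁, htrr, ht]
  have hzr : z ^ (2 ^ m) = z₀ * (1 + θ) + z₁ * θ := by
    rw [hz, frob, mul_pow, mul_pow, hz₀, hz₁, htrr, ht]
  rw [mul_pow, mul_pow, hxr, hyr, hzr, key, hx, hy, hz, ht]
  linear_combination (θ*x₁*y₁*z₁ + θ*x₀*y₀*z₀ + θ^2*x₁*y₁*z₁ + θ^2*x₁*y₁*z₀ +
    θ^2*x₁*y₀*z₁ + θ^2*x₁*y₀*z₀ + θ^2*x₀*y₁*z₁ + θ^2*x₀*y₁*z₀ + θ^2*x₀*y₀*z₁ +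
    θ^2*x₀*y₀*z₀ + θ^3*x₁*y₁*z₁ + θ^3*x₁*y₁*z₀ + θ^3*x₁*y₀*z₁ + θ^3*x₁*y₀*z₀ +
    θ^3*x₀*y₁*z₁ + θ^3*x₀*y₁*z₀ + θ^3*x₀*y₀*z₁ + θ^3*x₀*y₀*z₀) * h2
end

section
/- Let m ≥ 3 be an integer, r = 2^m, and a = ⌊(r−2)/3⌋. With g(j) as in the context, define n(j) = r^{j+1}·(r−1) and k(j) = r^j·(r+1)·a + 1 − g(j) (an integer, possibly expressed in ℝ). Then the sequence of encoding rates k(j)/n(j) converges as j → ∞ to the limit L = ((r+1)·a − r)/(r·(r−1)), and L > 0. In particular the paper's family of triorthogonal codes has encoding rate bounded away from zero. -/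
open Filter

/-- The genus `g_j` of the `j`-th function field in the Garcia–Stichtenoth-type tower:
`g_j = (r^{(j+1)/2} - 1)²` for odd `j` and `(r^{j/2} - 1)(r^{(j+2)/2} - 1)` for even `j`. -/
def towerGenus (r j : ℕ) : ℕ :=
  if j % 2 = 1 then (r ^ ((j + 1) / 2) - 1) ^ 2
  else (r ^ (j / 2) - 1) * (r ^ ((j + 2) / 2) - 1)

/-- The lower-order defect `r^{j+1} + 1 - g_j`. -/
def towerDelta (r j : ℕ) : ℕ :=
  if j % 2 = 1 then 2 * r ^ ((j + 1) / 2) else r ^ (j / 2) + r ^ ((j + 2) / 2)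

lemma towerGenus_add_delta (r : ℕ) (hr : 1 ≤ r) (j : ℕ) :
    towerGenus r j + towerDelta r j = r ^ (j + 1) + 1 := by
  unfold towerGenus towerDelta
  rcases Nat.eq_zero_or_pos (j % 2) with h | h
  · rw [if_neg (by omega), if_neg (by omega)]
    have hy : 1 ≤ r ^ (j / 2) := Nat.one_le_pow _ _ hr
    have hz : 1 ≤ r ^ ((j + 2) / 2) := Nat.one_le_pow _ _ hr
    have hyz : r ^ (j / 2) * r ^ ((j + 2) / 2) = r ^ (j + 1) := by
      rw [← pow_add]; congr 1; omega
    obtain ⟨y, hy'⟩ := Nat.exists_eq_add_of_le hy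
    obtain ⟨z, hz'⟩ := Nat.exists_eq_add_of_le hz
    rw [← hyz, hy', hz']
    simp [Nat.add_sub_cancel_left]
    ring
  · have h1 : j % 2 = 1 := by omega
    rw [if_pos h1, if_pos h1]
    have hx : 1 ≤ r ^ ((j + 1) / 2) := Nat.one_le_pow _ _ hr
    have hxx : r ^ ((j + 1) / 2) * r ^ ((j + 1) / 2) = r ^ (j + 1) := by
      rw [← pow_add]; congr 1; omega
    obtain ⟨x, hx'⟩ := Nat.exists_eq_add_of_le hx
    rw [← hxx, hx']
    simp [Nat.add_sub_cancel_left]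
    ring

lemma towerDelta_le (r : ℕ) (hr : 1 ≤ r) (j : ℕ) :
    towerDelta r j ≤ 2 * r ^ (j / 2 + 1) := by
  unfold towerDelta
  rcases Nat.eq_zero_or_pos (j % 2) with h | h
  · rw [if_neg (by omega)]
    have h2 : (j + 2) / 2 = j / 2 + 1 := by omega
    rw [h2, two_mul]
    exact Nat.add_le_add_right (Nat.pow_le_pow_right hr (by omega)) _
  · have h1 : j % 2 = 1 := by omega
    rw [if_pos h1, two_mul, two_mul]
    apply Nat.add_le_add <;>
    exact Nat.pow_le_pow_right hr (by omega)

/-- For `r = 2^m` with `m ≥ 3` and `a = ⌊(r-2)/3⌋`, the encoding rates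
`k_j/n_j = (r^j(r+1)a + 1 - g_j)/(r^{j+1}(r-1))` of the paper's family of triorthogonal
codes converge to `L = ((r+1)a - r)/(r(r-1))`, and `L > 0`: the rate is bounded away
from zero. -/
theorem encoding_rate_limit_positive
    (m : ℕ) (hm : 3 ≤ m) (r : ℕ) (hr : r = 2 ^ m)
    (a : ℕ) (ha : a = (r - 2) / 3) :
    Tendsto
      (fun j : ℕ =>
        ((r : ℝ) ^ j * ((r : ℝ) + 1) * (a : ℝ) + 1 - (towerGenus r j : ℝ)) /
          ((r : ℝ) ^ (j + 1) * ((r : ℝ) - 1)))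
      atTop
      (nhds ((((r : ℝ) + 1) * (a : ℝ) - (r : ℝ)) / ((r : ℝ) * ((r : ℝ) - 1)))) ∧
    0 < (((r : ℝ) + 1) * (a : ℝ) - (r : ℝ)) / ((r : ℝ) * ((r : ℝ) - 1)) := by
  have hr8 : 8 ≤ r := by
    rw [hr]
    calc (8 : ℕ) = 2 ^ 3 := by norm_num
    _ ≤ 2 ^ m := Nat.pow_le_pow_right (by norm_num) hm
  have hr1 : 1 ≤ r := by omega
  have ha2 : 2 ≤ a := by
    rw [ha]
    calc (2 : ℕ) = 6 / 3 := by norm_num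
    _ ≤ (r - 2) / 3 := Nat.div_le_div_right (by omega)
  have hrR : (8 : ℝ) ≤ (r : ℝ) := by exact_mod_cast hr8
  have haR : (2 : ℝ) ≤ (a : ℝ) := by exact_mod_cast ha2
  have hr0 : (0 : ℝ) < (r : ℝ) := by linarith
  have hr0' : (r : ℝ) ≠ 0 := ne_of_gt hr0
  have hrm1 : (0 : ℝ) < (r : ℝ) - 1 := by linarith
  have hrm1' : (r : ℝ) - 1 ≠ 0 := ne_of_gt hrm1
  have hpow : ∀ j : ℕ, (0 : ℝ) < (r : ℝ) ^ j := fun j => pow_pos hr0 j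
  -- positivity of the limit
  have hLpos : 0 < (((r : ℝ) + 1) * (a : ℝ) - (r : ℝ)) / ((r : ℝ) * ((r : ℝ) - 1)) := by
    apply div_pos
    · nlinarith
    · exact mul_pos hr0 hrm1
  refine ⟨?_, hLpos⟩
  set L : ℝ := (((r : ℝ) + 1) * (a : ℝ) - (r : ℝ)) / ((r : ℝ) * ((r : ℝ) - 1)) with hL
  -- cast of the genus identity
  have hgen : ∀ j : ℕ, (towerGenus r j : ℝ) = (r : ℝ) ^ (j + 1) + 1 - (towerDelta r j : ℝ) := by
    intro j
    have h := towerGenus_add_delta r hr1 j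
    have h' : (towerGenus r j : ℝ) + (towerDelta r j : ℝ) = (r : ℝ) ^ (j + 1) + 1 := by
      exact_mod_cast h
    linarith
  -- the rate decomposes as L + error
  have hdecomp : ∀ j : ℕ,
      ((r : ℝ) ^ j * ((r : ℝ) + 1) * (a : ℝ) + 1 - (towerGenus r j : ℝ)) /
          ((r : ℝ) ^ (j + 1) * ((r : ℝ) - 1))
        = L + (towerDelta r j : ℝ) / ((r : ℝ) ^ (j + 1) * ((r : ℝ) - 1)) := by
    intro j
    rw [hgen j, hL]
    have hpj : ((r : ℝ) ^ (j + 1)) ≠ 0 := ne_of_gt (hpow (j + 1))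
    field_simp
    ring
  -- the error tends to 0
  have herr : Tendsto (fun j : ℕ =>
      (towerDelta r j : ℝ) / ((r : ℝ) ^ (j + 1) * ((r : ℝ) - 1))) atTop (nhds 0) := by
    have hhalf : Tendsto (fun j : ℕ => j / 2) atTop atTop := by
      apply tendsto_atTop_atTop.mpr
      intro b
      exact ⟨2 * b, fun j hj => by omega⟩
    have hinv : Tendsto (fun n : ℕ => ((r : ℝ)⁻¹) ^ n) atTop (nhds 0) := by
      apply tendsto_pow_atTop_nhds_zero_of_norm_lt_one
      rw [norm_inv, Real.norm_eq_abs, abs_of_pos hr0]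
      rw [inv_lt_one_iff₀]
      right; linarith
    have hg : Tendsto (fun j : ℕ => 2 / (r : ℝ) ^ (j / 2)) atTop (nhds 0) := by
      have := (hinv.comp hhalf).const_mul (2 : ℝ)
      simp only [mul_zero] at this
      refine this.congr fun j => ?_
      simp [Function.comp, div_eq_mul_inv, inv_pow]
    apply squeeze_zero (fun j => div_nonneg (Nat.cast_nonneg _)
      (le_of_lt (mul_pos (hpow _) hrm1))) _ hg
    intro j
    rw [div_le_div_iff₀ (mul_pos (hpow _) hrm1) (hpow _)]
    have hd : (towerDelta r j : ℝ) ≤ 2 * (r : ℝ) ^ (j / 2 + 1) := by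
      have := towerDelta_le r hr1 j
      exact_mod_cast this
    calc (towerDelta r j : ℝ) * (r : ℝ) ^ (j / 2)
        ≤ 2 * (r : ℝ) ^ (j / 2 + 1) * (r : ℝ) ^ (j / 2) := by
          apply mul_le_mul_of_nonneg_right hd (le_of_lt (hpow _))
      _ = 2 * (r : ℝ) ^ (j / 2 + 1 + j / 2) := by rw [mul_assoc, ← pow_add]
      _ ≤ 2 * (r : ℝ) ^ (j + 1) := by
          apply mul_le_mul_of_nonneg_left _ (by norm_num)
          exact pow_le_pow_right₀ (by linarith) (by omega)
      _ ≤ 2 * ((r : ℝ) ^ (j + 1) * ((r : ℝ) - 1)) := by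
          nlinarith [hpow (j + 1)]
  have hlim : Tendsto (fun j : ℕ =>
      L + (towerDelta r j : ℝ) / ((r : ℝ) ^ (j + 1) * ((r : ℝ) - 1))) atTop (nhds L) := by
    have := (tendsto_const_nhds : Tendsto (fun _ : ℕ => L) atTop (nhds L)).add herr
    simpa using this
  exact hlim.congr fun j => (hdecomp j).symm
end

section
/- Let m ≥ 3 be an integer, r = 2^m, and a = ⌊(r−2)/3⌋. With g(j) and n(j) = r^{j+1}·(r−1) as in the context, the sequence (n(j) + 1 − g(j))/n(j) converges as j → ∞ to 1 − 1/(r−1). Since the j-th code in the paper's family has dimension k(j) = r^j(r+1)a + 1 − g(j) and designed distance d(j) = n(j) − r^j(r+1)a, so that k(j) + d(j) = n(j) + 1 − g(j), this says the family satisfies lim_{j→∞} (k(j)/n(j) + d(j)/n(j)) = 1 − 1/(r−1), i.e. the triorthogonal family attains the Tsfasman–Vladut–Zink bound R + δ = 1 − 1/(√q − 1) for alphabet size q = r². -/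
open Filter

/-- For `r = 2^m` with `m ≥ 3` and `n_j = r^{j+1}(r-1)`, the sequence
`(n_j + 1 - g_j)/n_j = k_j/n_j + d_j/n_j` converges to `1 - 1/(r-1)`: the paper's family of
triorthogonal codes attains the Tsfasman–Vladut–Zink bound for alphabet size `q = r²`. -/
theorem family_attains_TVZ_bound
    (m : ℕ) (hm : 3 ≤ m) (r : ℕ) (hr : r = 2 ^ m)
    (a : ℕ) (ha : a = (r - 2) / 3) :
    Tendsto
      (fun j : ℕ =>
        ((r : ℝ) ^ (j + 1) * ((r : ℝ) - 1) + 1 - (towerGenus r j : ℝ)) /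
          ((r : ℝ) ^ (j + 1) * ((r : ℝ) - 1)))
      atTop
      (nhds (1 - 1 / ((r : ℝ) - 1))) := by
  have hr8 : 8 ≤ r := by
    subst hr
    calc 8 = 2 ^ 3 := by norm_num
    _ ≤ 2 ^ m := Nat.pow_le_pow_right (by norm_num) hm
  have hR : (8 : ℝ) ≤ (r : ℝ) := by exact_mod_cast hr8
  have hR1 : (1 : ℝ) < (r : ℝ) := by linarith
  have hRm1 : (0 : ℝ) < (r : ℝ) - 1 := by linarith
  have hRpos : (0 : ℝ) < (r : ℝ) := by linarith
  have hm1ne : (r : ℝ) - 1 ≠ 0 := ne_of_gt hRm1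
  have hm1ne' : (-1 : ℝ) + (r : ℝ) ≠ 0 := by intro h; apply hm1ne; linarith
  set R : ℝ := (r : ℝ)
  set L : ℝ := 1 - 1 / (R - 1) with hL
  -- the error term
  set e : ℕ → ℝ := fun j =>
    if j % 2 = 1 then 2 / (R ^ ((j + 1) / 2) * (R - 1))
    else (1 / R ^ (j / 2) + 1 / R ^ (j / 2 + 1)) / (R - 1) with he
  have key : ∀ j : ℕ,
      (R ^ (j + 1) * (R - 1) + 1 - (towerGenus r j : ℝ)) / (R ^ (j + 1) * (R - 1))
        = L + e j := by
    intro j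
    simp only [hL, he]
    rcases Nat.even_or_odd j with hj | hj
    · have hj2 : j % 2 = 0 := Nat.even_iff.mp hj
      set s := j / 2 with hs
      have hjs : j = 2 * s := by omega
      have h1 : (1 : ℕ) ≤ r ^ s := Nat.one_le_pow _ _ (by omega)
      have h2 : (1 : ℕ) ≤ r ^ (s + 1) := Nat.one_le_pow _ _ (by omega)
      have hg : (towerGenus r j : ℝ) = (R ^ s - 1) * (R ^ (s + 1) - 1) := by
        rw [towerGenus, if_neg (by omega)]
        have : (j + 2) / 2 = s + 1 := by omega
        rw [this, ← hs]
        push_cast [Nat.cast_sub h1, Nat.cast_sub h2]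
        ring
      have hpow : R ^ (j + 1) = R ^ s * R ^ (s + 1) := by
        rw [← pow_add]; congr 1; omega
      have hsne : R ^ s ≠ 0 := by positivity
      have hs1ne : R ^ (s + 1) ≠ 0 := by positivity
      rw [hg, hpow]
      simp only [if_neg (by omega : ¬ j % 2 = 1), ← hs]
      field_simp [hm1ne']
      ring
    · have hj2 : j % 2 = 1 := Nat.odd_iff.mp hj
      set s := (j + 1) / 2 with hs
      have hjs : j + 1 = 2 * s := by omega
      have h1 : (1 : ℕ) ≤ r ^ s := Nat.one_le_pow _ _ (by omega)
      have hg : (towerGenus r j : ℝ) = (R ^ s - 1) ^ 2 := by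
        rw [towerGenus, if_pos hj2, ← hs]
        push_cast [Nat.cast_sub h1]
        ring
      have hpow : R ^ (j + 1) = R ^ s * R ^ s := by
        rw [← pow_add]; congr 1; omega
      have hsne : R ^ s ≠ 0 := by positivity
      rw [hg, hpow]
      simp only [if_pos hj2, ← hs]
      field_simp [hm1ne']
      ring
  simp only [key]
  have hlim0 : Tendsto e atTop (nhds 0) := by
    have hub : Tendsto (fun j : ℕ => (2 / (R - 1)) * (1 / R) ^ (j / 2)) atTop (nhds 0) := by
      have h2 : Tendsto (fun j : ℕ => j / 2) atTop atTop :=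
        tendsto_atTop_atTop.mpr fun b => ⟨2 * b, fun a ha => by omega⟩
      have h3 : Tendsto (fun n : ℕ => (1 / R) ^ n) atTop (nhds 0) := by
        apply tendsto_pow_atTop_nhds_zero_of_lt_one
        · positivity
        · rw [div_lt_one hRpos]; linarith
      have := (h3.comp h2).const_mul (2 / (R - 1))
      simpa using this
    refine squeeze_zero (fun j => ?_) (fun j => ?_) hub
    · simp only [he]
      split_ifs
      · positivity
      · positivity
    · simp only [he]
      have hrw : 2 / (R - 1) * (1 / R) ^ (j / 2) = 2 / (R ^ (j / 2) * (R - 1)) := by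
        rw [div_pow, one_pow]
        field_simp
      rw [hrw]
      have hpowle : ∀ k l : ℕ, k ≤ l → R ^ k ≤ R ^ l := fun k l hkl =>
        pow_le_pow_right₀ (by linarith) hkl
      split_ifs with h
      · gcongr <;> first | omega | positivity | linarith
      · have hrw2 : 2 / (R ^ (j / 2) * (R - 1))
            = (1 / R ^ (j / 2) + 1 / R ^ (j / 2)) / (R - 1) := by
          field_simp
          ring
        rw [hrw2]
        have h1 : 1 / R ^ (j / 2 + 1) ≤ 1 / R ^ (j / 2) :=
          one_div_le_one_div_of_le (by positivity) (hpowle _ _ (by omega))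
        gcongr <;> first | exact h1 | positivity | linarith
  have := (tendsto_const_nhds (x := L) (f := atTop)).add hlim0
  simpa using this
end
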